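/- Let V be a simple object of R whose endomorphism algebra End_R(V) is one-dimensional over ℝ (i.e., consists of the real scalar multiples of the identity). Then W := E(V) is a simple object of C; the morphism ε₁∘π₂ + ε₂∘π₁ is an isomorphism φ : W → B(W) in C satisfying B(φ)∘φ = 1_W; and there exists no isomorphism ψ : W → B(W) in C with B(ψ)∘ψ = -1_W. -/

import Mathlib

set_option linter.unusedSectionVars false

open CategoryTheory CategoryTheory.Limits

universe v u

variable (R : Type u) [Category.{v} R] [Abelian R] [CategoryTheory.Linear ℝ R]

/-- Objects of the category `C`: pairs `(V, ι)` with `ι ∘ ι = -1`. -/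
structure CObj : Type max u v where
  V : R
  ι : V ⟶ V
  hι : ι ≫ ι = -𝟙 V

variable {R}

instance : Category.{v} (CObj R) where
  Hom W₁ W₂ := { φ : W₁.V ⟶ W₂.V // W₁.ι ≫ φ = φ ≫ W₂.ι }
  id W := ⟨𝟙 W.V, by simp⟩
  comp f g := ⟨f.1 ≫ g.1, by
    rw [← Category.assoc, f.2, Category.assoc, g.2, Category.assoc]⟩
  id_comp f := Subtype.ext (Category.id_comp f.1)
  comp_id f := Subtype.ext (Category.comp_id f.1)
  assoc f g h := Subtype.ext (Category.assoc f.1 g.1 h.1)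

@[ext]
lemma CObj.hom_ext {W₁ W₂ : CObj R} {f g : W₁ ⟶ W₂} (h : f.1 = g.1) : f = g :=
  Subtype.ext h

@[simp]
lemma CObj.id_coe (W : CObj R) : (𝟙 W : W ⟶ W).1 = 𝟙 W.V := rfl

@[simp]
lemma CObj.comp_coe {W₁ W₂ W₃ : CObj R} (f : W₁ ⟶ W₂) (g : W₂ ⟶ W₃) :
    (f ≫ g).1 = f.1 ≫ g.1 := rfl

instance (W₁ W₂ : CObj R) : Zero (W₁ ⟶ W₂) := ⟨⟨0, by simp⟩⟩

instance (W₁ W₂ : CObj R) : Add (W₁ ⟶ W₂) :=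
  ⟨fun f g => ⟨f.1 + g.1, by rw [Preadditive.comp_add, Preadditive.add_comp, f.2, g.2]⟩⟩

instance (W₁ W₂ : CObj R) : Neg (W₁ ⟶ W₂) :=
  ⟨fun f => ⟨-f.1, by rw [Preadditive.comp_neg, Preadditive.neg_comp, f.2]⟩⟩

instance (W₁ W₂ : CObj R) : Sub (W₁ ⟶ W₂) :=
  ⟨fun f g => ⟨f.1 - g.1, by rw [Preadditive.comp_sub, Preadditive.sub_comp, f.2, g.2]⟩⟩

instance (W₁ W₂ : CObj R) : SMul ℕ (W₁ ⟶ W₂) :=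
  ⟨fun n f => ⟨n • f.1, by rw [Linear.comp_smul, Linear.smul_comp, f.2]⟩⟩

instance (W₁ W₂ : CObj R) : SMul ℤ (W₁ ⟶ W₂) :=
  ⟨fun n f => ⟨n • f.1, by rw [Linear.comp_smul, Linear.smul_comp, f.2]⟩⟩

@[simp] lemma CObj.zero_coe (W₁ W₂ : CObj R) : (0 : W₁ ⟶ W₂).1 = 0 := rfl
@[simp] lemma CObj.add_coe {W₁ W₂ : CObj R} (f g : W₁ ⟶ W₂) : (f + g).1 = f.1 + g.1 := rfl
@[simp] lemma CObj.neg_coe {W₁ W₂ : CObj R} (f : W₁ ⟶ W₂) : (-f).1 = -f.1 := rfl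

instance (W₁ W₂ : CObj R) : AddCommGroup (W₁ ⟶ W₂) :=
  Function.Injective.addCommGroup (fun f : W₁ ⟶ W₂ => f.1) Subtype.val_injective
    rfl (fun _ _ => rfl) (fun _ => rfl) (fun _ _ => rfl) (fun _ _ => rfl) (fun _ _ => rfl)

instance : Preadditive (CObj R) where
  add_comp P Q S f f' g := by apply Subtype.ext; exact Preadditive.add_comp _ _ _ f.1 f'.1 g.1
  comp_add P Q S f g g' := by apply Subtype.ext; exact Preadditive.comp_add _ _ _ f.1 g.1 g'.1

variable (R)

/-- The conjugation functor `B : C → C`. -/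
def Bfunctor : CObj R ⥤ CObj R where
  obj W := ⟨W.V, -W.ι, by simp [W.hι]⟩
  map f := ⟨f.1, by simp [f.2]⟩
  map_id _ := rfl
  map_comp _ _ := rfl

/-- The forgetful functor `F : C → R`. -/
def Ffunctor : CObj R ⥤ R where
  obj W := W.V
  map f := f.1
  map_id _ := rfl
  map_comp _ _ := rfl

/-- The complexification functor `E : R → C`. -/
noncomputable def Efunctor : R ⥤ CObj R where
  obj V :=
    { V := V ⊞ V
      ι := -(biprod.snd ≫ biprod.inl) + biprod.fst ≫ biprod.inr
      hι := by ext <;> simp }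
  map φ := ⟨biprod.map φ φ, by ext <;> simp⟩
  map_id V := Subtype.ext (by ext <;> simp)
  map_comp f g := Subtype.ext (by ext <;> simp)

variable {R}

/-- The biproduct `(V₁ ⊕ V₂, ι₁ ⊕ ι₂)` of two objects of `C`. -/
noncomputable def csum (W₁ W₂ : CObj R) : CObj R where
  V := W₁.V ⊞ W₂.V
  ι := biprod.map W₁.ι W₂.ι
  hι := by ext <;> simp [W₁.hι, W₂.hι]

/-- Multiplication by `i` as a morphism in `C`. -/
def iMor (W : CObj R) : W ⟶ W := ⟨W.ι, rfl⟩

open scoped TensorProduct Quaternion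

variable [EssentiallySmall.{v} R]

/-!
If `Y ↪ E(V)` is a nonzero subobject in `C` with first component `g : Y → V`, then `g ≠ 0`.
Were `g` mono, it would be an isomorphism `Y ≅ V` transporting the complex structure of `Y` to
an endomorphism `J` of `V` with `J² = -1`, impossible when `End V = ℝ`. So `ker g ≠ 0`, and the
second component maps `ker g` isomorphically onto `V`; together with its `ι`-translate this
yields a section of `Y → E(V)`, which is therefore an isomorphism.

A morphism `ψ : E(V) → B(E(V))` is conjugate-linear, so its matrix is `[[a, b], [b, -a]]` and
`ψ² = a² + b²` on the first summand. With `a, b` real scalars, `ψ² = -1` is impossible.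
-/

section ScalarEndomorphisms

variable {𝒜 : Type*} [Category 𝒜] [Preadditive 𝒜] [Linear ℝ 𝒜] {X : 𝒜}

lemma smul_id_ne_neg_id (hX : 𝟙 X ≠ 0) {c : ℝ} (hc : 0 ≤ c) : c • 𝟙 X ≠ -𝟙 X := by
  intro h
  have : (c + 1) • 𝟙 X = 0 := by rw [add_smul, one_smul, h, neg_add_cancel]
  rcases smul_eq_zero.mp this with hc' | hX'
  · linarith
  · exact hX hX'

lemma comp_self_ne_neg_id (hX : 𝟙 X ≠ 0) (hscalar : ∀ f : X ⟶ X, ∃ c : ℝ, f = c • 𝟙 X)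
    (J : X ⟶ X) : J ≫ J ≠ -𝟙 X := by
  obtain ⟨c, rfl⟩ := hscalar J
  rw [Linear.smul_comp, Linear.comp_smul, Category.id_comp, smul_smul]
  exact smul_id_ne_neg_id hX (mul_self_nonneg c)

end ScalarEndomorphisms

variable {𝒜 : Type*} [Category 𝒜] [Abelian 𝒜] [Linear ℝ 𝒜]

namespace CObj

variable {W₁ W₂ : CObj 𝒜}

lemma isIso_of_isIso_val (f : W₁ ⟶ W₂) [IsIso f.1] : IsIso f :=
  ⟨⟨⟨inv f.1, by rw [IsIso.comp_inv_eq, Category.assoc, f.2, IsIso.inv_hom_id_assoc]⟩,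
    hom_ext (IsIso.hom_inv_id f.1), hom_ext (IsIso.inv_hom_id f.1)⟩⟩

noncomputable def ker (f : W₁ ⟶ W₂) : CObj 𝒜 where
  V := kernel f.1
  ι := kernel.lift f.1 (kernel.ι f.1 ≫ W₁.ι)
    (by rw [Category.assoc, f.2, kernel.condition_assoc, zero_comp])
  hι := by ext; simp [W₁.hι]

noncomputable def ker.ι (f : W₁ ⟶ W₂) : ker f ⟶ W₁ :=
  ⟨kernel.ι f.1, kernel.lift_ι _ _ _⟩

instance mono_val (f : W₁ ⟶ W₂) [Mono f] : Mono f.1 := by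
  refine Preadditive.mono_of_kernel_zero (congrArg Subtype.val (?_ : ker.ι f = 0))
  rw [← cancel_mono f, zero_comp]
  exact hom_ext (kernel.condition f.1)

lemma isEmpty_val_iso {V : 𝒜} (hV : 𝟙 V ≠ 0) (hscalar : ∀ f : V ⟶ V, ∃ c : ℝ, f = c • 𝟙 V)
    (Y : CObj 𝒜) : IsEmpty (Y.V ≅ V) :=
  ⟨fun e => comp_self_ne_neg_id hV hscalar (e.inv ≫ Y.ι ≫ e.hom) (by simp [reassoc_of% Y.hι])⟩

end CObj

namespace Efunctor

variable {V : 𝒜} {Y : CObj 𝒜} {g : Y.V ⟶ V ⊞ V}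

lemma ι_comp_comp_fst
    (hg : Y.ι ≫ g = g ≫ (-(biprod.snd ≫ biprod.inl) + biprod.fst ≫ biprod.inr)) :
    Y.ι ≫ g ≫ biprod.fst = -(g ≫ biprod.snd) := by
  simpa using hg =≫ biprod.fst

lemma ι_comp_comp_snd
    (hg : Y.ι ≫ g = g ≫ (-(biprod.snd ≫ biprod.inl) + biprod.fst ≫ biprod.inr)) :
    Y.ι ≫ g ≫ biprod.snd = g ≫ biprod.fst := by
  simpa using hg =≫ biprod.snd

lemma comp_fst_ne_zero
    (hg : Y.ι ≫ g = g ≫ (-(biprod.snd ≫ biprod.inl) + biprod.fst ≫ biprod.inr)) (h : g ≠ 0) :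
    g ≫ biprod.fst ≠ 0 := by
  intro hfst
  have hsnd : g ≫ biprod.snd = 0 := by
    rw [← neg_eq_zero, ← ι_comp_comp_fst hg, hfst, comp_zero]
  exact h (biprod.hom_ext _ _ (by simpa using hfst) (by simpa using hsnd))

lemma isIso_of_not_mono_comp_fst [Simple V]
    (hg : Y.ι ≫ g = g ≫ (-(biprod.snd ≫ biprod.inl) + biprod.fst ≫ biprod.inr))
    [Mono g] (h : ¬Mono (g ≫ biprod.fst)) : IsIso g := by
  set k := kernel.ι (g ≫ biprod.fst)
  have hk : k ≠ 0 := fun h' => h (Preadditive.mono_of_kernel_zero h')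
  have hkfst : k ≫ g ≫ biprod.fst = 0 := kernel.condition _
  set u := k ≫ g ≫ biprod.snd
  have hku : k ≫ g = u ≫ biprod.inr := by
    ext <;> simp [u, hkfst]
  have : Mono u := mono_of_mono_fac hku.symm
  have : IsIso u := isIso_of_mono_of_nonzero fun hu => hk <| by
    rw [← cancel_mono g, hku, hu, zero_comp, zero_comp]
  let s : V ⊞ V ⟶ Y.V := biprod.fst ≫ (-(inv u ≫ k ≫ Y.ι)) + biprod.snd ≫ inv u ≫ k
  have hs : s ≫ g = 𝟙 _ := by
    ext <;> simp [s, u, hkfst, ι_comp_comp_fst hg, ι_comp_comp_snd hg]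
  have : Epi g := (IsSplitEpi.mk' ⟨s, hs⟩).epi
  exact isIso_of_mono_of_epi g

lemma isIso_of_mono_of_ne_zero [Simple V] (hscalar : ∀ f : V ⟶ V, ∃ c : ℝ, f = c • 𝟙 V)
    (hg : Y.ι ≫ g = g ≫ (-(biprod.snd ≫ biprod.inl) + biprod.fst ≫ biprod.inr))
    [hmono : Mono g] (h : g ≠ 0) : IsIso g := by
  refine isIso_of_not_mono_comp_fst hg fun _ => ?_
  have := isIso_of_mono_of_nonzero (comp_fst_ne_zero hg h)
  exact (CObj.isEmpty_val_iso (id_nonzero V) hscalar Y).false (asIso (g ≫ biprod.fst))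

theorem obj_simple [Simple V] (hscalar : ∀ f : V ⟶ V, ∃ c : ℝ, f = c • 𝟙 V) :
    Simple ((Efunctor 𝒜).obj V) where
  mono_isIso_iff_nonzero {Y} f _ := by
    refine ⟨fun _ hf => id_nonzero V ?_, fun hf => ?_⟩
    · have h := congrArg Subtype.val (IsIso.inv_hom_id f)
      simp only [hf, comp_zero, CObj.zero_coe, CObj.id_coe] at h
      have hid : 𝟙 (V ⊞ V) = 0 := h.symm
      simpa using biprod.inl ≫= hid =≫ biprod.fst
    · have : IsIso f.1 := isIso_of_mono_of_ne_zero (hmono := CObj.mono_val f) hscalar f.2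
        fun h => hf (CObj.hom_ext h)
      exact CObj.isIso_of_isIso_val f

lemma inl_comp_self_comp_fst {ψ : V ⊞ V ⟶ V ⊞ V}
    (hψ : (-(biprod.snd ≫ biprod.inl) + biprod.fst ≫ biprod.inr) ≫ ψ =
      ψ ≫ (-(-(biprod.snd ≫ biprod.inl) + biprod.fst ≫ biprod.inr))) :
    biprod.inl ≫ ψ ≫ ψ ≫ biprod.fst =
      (biprod.inl ≫ ψ ≫ biprod.fst) ≫ (biprod.inl ≫ ψ ≫ biprod.fst) +
        (biprod.inl ≫ ψ ≫ biprod.snd) ≫ (biprod.inl ≫ ψ ≫ biprod.snd) := by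
  have hinr : biprod.inr ≫ ψ ≫ biprod.fst = biprod.inl ≫ ψ ≫ biprod.snd := by
    simpa using biprod.inl ≫= hψ =≫ biprod.fst
  conv_lhs => rw [← Category.id_comp (ψ ≫ biprod.fst), ← biprod.total]
  simp only [Preadditive.add_comp, Preadditive.comp_add, Category.assoc, hinr]

lemma comp_self_ne_neg_id_of_anticommute (hV : 𝟙 V ≠ 0)
    (hscalar : ∀ f : V ⟶ V, ∃ c : ℝ, f = c • 𝟙 V) {ψ : V ⊞ V ⟶ V ⊞ V}
    (hψ : (-(biprod.snd ≫ biprod.inl) + biprod.fst ≫ biprod.inr) ≫ ψ =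
      ψ ≫ (-(-(biprod.snd ≫ biprod.inl) + biprod.fst ≫ biprod.inr))) :
    ψ ≫ ψ ≠ -𝟙 (V ⊞ V) := by
  intro hsq
  obtain ⟨a, ha⟩ := hscalar (biprod.inl ≫ ψ ≫ biprod.fst)
  obtain ⟨b, hb⟩ := hscalar (biprod.inl ≫ ψ ≫ biprod.snd)
  have h := inl_comp_self_comp_fst hψ
  rw [reassoc_of% hsq, ha, hb] at h
  refine smul_id_ne_neg_id hV (add_nonneg (mul_self_nonneg a) (mul_self_nonneg b)) ?_
  simpa [add_smul, smul_smul] using h.symm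

variable (V)

lemma anticommute_swap :
    (-(biprod.snd ≫ biprod.inl) + biprod.fst ≫ biprod.inr) ≫
        (biprod.snd ≫ biprod.inl + biprod.fst ≫ biprod.inr : V ⊞ V ⟶ V ⊞ V) =
      (biprod.snd ≫ biprod.inl + biprod.fst ≫ biprod.inr) ≫
        (-(-(biprod.snd ≫ biprod.inl) + biprod.fst ≫ biprod.inr)) := by
  ext <;> simp

lemma swap_comp_swap :
    (biprod.snd ≫ biprod.inl + biprod.fst ≫ biprod.inr : V ⊞ V ⟶ V ⊞ V) ≫
      (biprod.snd ≫ biprod.inl + biprod.fst ≫ biprod.inr) = 𝟙 (V ⊞ V) := by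
  ext <;> simp

noncomputable def realStructure :
    (Efunctor 𝒜).obj V ⟶ (Bfunctor 𝒜).obj ((Efunctor 𝒜).obj V) :=
  ⟨biprod.snd ≫ biprod.inl + biprod.fst ≫ biprod.inr, anticommute_swap V⟩

instance : IsIso (realStructure V) :=
  have : IsIso (realStructure V).1 := ⟨_, swap_comp_swap V, swap_comp_swap V⟩
  CObj.isIso_of_isIso_val _

end Efunctor

theorem statement7
    (V : R) [Simple V]
    (h1 : ∀ f : V ⟶ V, ∃ c : ℝ, f = c • 𝟙 V) :
    Simple ((Efunctor R).obj V) ∧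
    (∃ φ : (Efunctor R).obj V ⟶ (Bfunctor R).obj ((Efunctor R).obj V),
        φ.1 = biprod.snd ≫ biprod.inl + biprod.fst ≫ biprod.inr ∧ IsIso φ ∧
        φ.1 ≫ φ.1 = 𝟙 ((Efunctor R).obj V).V) ∧
    ¬∃ ψ : (Efunctor R).obj V ⟶ (Bfunctor R).obj ((Efunctor R).obj V),
        IsIso ψ ∧ ψ.1 ≫ ψ.1 = -𝟙 ((Efunctor R).obj V).V :=
  ⟨Efunctor.obj_simple h1,
    ⟨Efunctor.realStructure V, rfl, inferInstance, Efunctor.swap_comp_swap V⟩,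
    fun ⟨ψ, _, hψ⟩ =>
      Efunctor.comp_self_ne_neg_id_of_anticommute (id_nonzero V) h1 ψ.2 hψ⟩
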